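/- arXiv:0910.3705 — 7 statements merged into one kernel-verified Lean document; each statement's English description precedes it below -/
import Mathlib

section
/- If A = (A₁, A₁⁻¹, …, A_m, A_m⁻¹) with equal weights λᵢ = 1/(2m) and μ = 1, then the resolvent average R₁(A,λ) equals the identity matrix. -/
/-! For positive definite `A`, `(A⁻¹ + 1)⁻¹ = (A + 1)⁻¹ A`, so the resolvents of `A` and `A⁻¹` add up
to `(A + 1)⁻¹ (1 + A) = 1`. Averaging `m` such pairs with weights `1/(2m)` gives `½ · 1`, whose
inverse minus the identity is the identity. -/

open Matrix

namespace Matrix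

variable {n R : Type*} [Fintype n] [DecidableEq n] [CommRing R]

theorem inv_add_one_inv_eq_inv_add_one_mul {A : Matrix n n R} (hA : IsUnit A.det) :
    (A⁻¹ + 1)⁻¹ = (A + 1)⁻¹ * A := by
  have : A⁻¹ + 1 = A⁻¹ * (A + 1) := by rw [mul_add, nonsing_inv_mul A hA, mul_one, add_comm]
  rw [this, mul_inv_rev, nonsing_inv_nonsing_inv A hA]

theorem add_one_inv_add_inv_add_one_inv_eq_one {A : Matrix n n R} (hA : IsUnit A.det)
    (hA₁ : IsUnit (A + 1).det) : (A + 1)⁻¹ + (A⁻¹ + 1)⁻¹ = 1 := by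
  calc (A + 1)⁻¹ + (A⁻¹ + 1)⁻¹ = (A + 1)⁻¹ * (A + 1) := by
        rw [inv_add_one_inv_eq_inv_add_one_mul hA, mul_add, mul_one, add_comm]
    _ = 1 := nonsing_inv_mul _ hA₁

theorem PosDef.add_one_inv_add_inv_add_one_inv_eq_one {K : Type*} [Field K] [PartialOrder K]
    [StarRing K] [StarOrderedRing K] {A : Matrix n n K} (hA : A.PosDef) :
    (A + 1)⁻¹ + (A⁻¹ + 1)⁻¹ = 1 :=
  Matrix.add_one_inv_add_inv_add_one_inv_eq_one ((isUnit_iff_isUnit_det A).mp hA.isUnit)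
    ((isUnit_iff_isUnit_det _).mp (hA.add_posSemidef PosSemidef.one).isUnit)

end Matrix

theorem resolvent_average_of_inverses_eq_id (N m : ℕ) (hm : 0 < m)
    (A : Fin m → Matrix (Fin N) (Fin N) ℝ) (hA : ∀ i, (A i).PosDef) :
    (∑ i, ((1 : ℝ) / (2 * m)) • ((A i + 1)⁻¹ + ((A i)⁻¹ + 1)⁻¹))⁻¹ - 1
      = (1 : Matrix (Fin N) (Fin N) ℝ) := by
  have hhalf : (m : ℝ) * (1 / (2 * m)) = 2⁻¹ := by field_simp
  simp_rw [fun i => (hA i).add_one_inv_add_inv_add_one_inv_eq_one]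
  rw [Finset.sum_const, Finset.card_univ, Fintype.card_fin, ← Nat.cast_smul_eq_nsmul ℝ, smul_smul,
    hhalf, inv_eq_left_inv (B := (2 : ℝ) • 1) (by simp), two_smul, add_sub_cancel_right]
end

section
/- The resolvent average is monotone: if Aᵢ ⪰ Bᵢ (i.e., Aᵢ − Bᵢ is positive semidefinite) for all i, where all Aᵢ, Bᵢ are positive semidefinite, then R_μ(A,λ) ⪰ R_μ(B,λ). -/
/-!
Both resolvent averages are `X ↦ X⁻¹ - μ⁻¹ • 1` applied to a weighted sum of the inverses of the
positive definite matrices `Aᵢ + μ⁻¹ • 1`. Matrix inversion is Loewner-antitone on positive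
definite matrices, and weighted sums with nonnegative weights preserve the Loewner order, so the
two antitone steps compose to a monotone map.
-/

open Matrix
open scoped ComplexOrder

namespace Matrix

/-- Both sides are the positive semidefiniteness of `fromBlocks A 1 1 B⁻¹`, read through its two
Schur complements. -/
theorem PosDef.posSemidef_inv_sub_inv {n K : Type*} [Fintype n] [DecidableEq n] [Field K]
    [PartialOrder K] [StarRing K] [StarOrderedRing K] {A B : Matrix n n K}
    (hA : A.PosDef) (hB : B.PosDef) (hAB : (A - B).PosSemidef) : (B⁻¹ - A⁻¹).PosSemidef := by
  have := hA.isUnit.invertible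
  have := hB.isUnit.invertible
  have := hB.inv.isUnit.invertible
  have hblock : (fromBlocks A 1 1ᴴ B⁻¹).PosSemidef := by
    rw [PosDef.fromBlocks₂₂ _ _ hB.inv]
    simpa [inv_inv_of_invertible] using hAB
  rw [PosDef.fromBlocks₁₁ _ _ hA] at hblock
  simpa using hblock

variable {ι n 𝕜 : Type*} [Fintype ι] [RCLike 𝕜]

theorem posSemidef_sum_smul_sub_sum_smul {w : ι → ℝ} (hw : ∀ i, 0 ≤ w i)
    {A B : ι → Matrix n n 𝕜} (hAB : ∀ i, (A i - B i).PosSemidef) :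
    (∑ i, w i • A i - ∑ i, w i • B i).PosSemidef := by
  rw [← Finset.sum_sub_distrib]
  refine posSemidef_sum _ fun i _ => ?_
  rw [← smul_sub]
  exact (hAB i).smul (hw i)

theorem posDef_sum_smul [Nonempty ι] {w : ι → ℝ} (hw : ∀ i, 0 < w i)
    {A : ι → Matrix n n 𝕜} (hA : ∀ i, (A i).PosDef) : (∑ i, w i • A i).PosDef :=
  posDef_sum Finset.univ_nonempty fun i _ => (hA i).smul (hw i)

end Matrix

theorem resolvent_average_monotone_general (N n : ℕ)
    (A B : Fin n → Matrix (Fin N) (Fin N) ℝ) (w : Fin n → ℝ) (μ : ℝ)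
    (hA : ∀ i, (A i).PosSemidef) (hB : ∀ i, (B i).PosSemidef)
    (hAB : ∀ i, (A i - B i).PosSemidef)
    (hw : ∀ i, 0 < w i) (hμ : 0 < μ) :
    (((∑ i, w i • (A i + μ⁻¹ • 1)⁻¹)⁻¹ - μ⁻¹ • (1 : Matrix (Fin N) (Fin N) ℝ))
      - ((∑ i, w i • (B i + μ⁻¹ • 1)⁻¹)⁻¹ - μ⁻¹ • 1)).PosSemidef := by
  rcases isEmpty_or_nonempty (Fin n) with hn | hn
  · simpa using PosSemidef.zero
  have hshift : (μ⁻¹ • (1 : Matrix (Fin N) (Fin N) ℝ)).PosDef := PosDef.one.smul (inv_pos.2 hμ)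
  have hA' i := PosDef.posSemidef_add (hA i) hshift
  have hB' i := PosDef.posSemidef_add (hB i) hshift
  have hres i : ((B i + μ⁻¹ • 1)⁻¹ - (A i + μ⁻¹ • 1)⁻¹).PosSemidef :=
    (hA' i).posSemidef_inv_sub_inv (hB' i) (by simpa using hAB i)
  rw [sub_sub_sub_cancel_right]
  exact (posDef_sum_smul hw fun i => (hB' i).inv).posSemidef_inv_sub_inv
    (posDef_sum_smul hw fun i => (hA' i).inv)
    (posSemidef_sum_smul_sub_sum_smul (fun i => (hw i).le) hres)

theorem resolvent_average_monotone (N n : ℕ)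
    (A B : Fin n → Matrix (Fin N) (Fin N) ℝ) (w : Fin n → ℝ) (μ : ℝ)
    (hA : ∀ i, (A i).PosSemidef) (hB : ∀ i, (B i).PosSemidef)
    (hAB : ∀ i, (A i - B i).PosSemidef)
    (hw : ∀ i, 0 < w i) (hw1 : ∑ i, w i = 1) (hμ : 0 < μ) :
    (((∑ i, w i • (A i + μ⁻¹ • 1)⁻¹)⁻¹ - μ⁻¹ • (1 : Matrix (Fin N) (Fin N) ℝ))
      - ((∑ i, w i • (B i + μ⁻¹ • 1)⁻¹)⁻¹ - μ⁻¹ • 1)).PosSemidef :=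
  resolvent_average_monotone_general N n A B w μ hA hB hAB hw hμ
end

section
/- The resolvent average is strictly monotone: if Aᵢ ⪰ Bᵢ for all i and additionally A_j ≻ B_j (A_j − B_j positive definite) for some index j, then R_μ(A,λ) ≻ R_μ(B,λ). -/
/-!
Shift by `μ⁻¹` makes every `Bᵢ + μ⁻¹` positive definite, and matrix inversion is strictly
antitone on positive definite matrices: `X - Y ≻ 0` forces `Y⁻¹ - X⁻¹ ≻ 0`, because
`Y⁻¹ - X⁻¹ = X⁻¹ (D + D Y⁻¹ D) X⁻¹` with `D = X - Y`. Inverting the shifted matrices reverses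
the order, the weighted sum inherits strictness from the index `j`, and inverting again
reverses it back; the final shift by `μ⁻¹` cancels in the difference.
-/

open Matrix

open scoped ComplexOrder

namespace Matrix

variable {n 𝕜 : Type*} [RCLike 𝕜]

theorem PosDef.of_posSemidef_sub {X Y : Matrix n n 𝕜} (hY : Y.PosDef) (hXY : (X - Y).PosSemidef) :
    X.PosDef := by
  simpa using hY.add_posSemidef hXY

theorem posDef_sum_of_posSemidef_of_posDef {ι : Type*} [Fintype ι] {M : ι → Matrix n n 𝕜}
    (hM : ∀ i, (M i).PosSemidef) (j : ι) (hj : (M j).PosDef) : (∑ i, M i).PosDef := by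
  classical
  rw [← Finset.add_sum_erase _ _ (Finset.mem_univ j)]
  exact hj.add_posSemidef (posSemidef_sum _ fun i _ => hM i)

variable [Fintype n] [DecidableEq n]

theorem inv_sub_inv_eq {R : Type*} [CommRing R] {X Y : Matrix n n R} (hX : IsUnit X) (hY : IsUnit Y) :
    Y⁻¹ - X⁻¹ = X⁻¹ * (X - Y + (X - Y) * Y⁻¹ * (X - Y)) * X⁻¹ := by
  have hX' := (isUnit_iff_isUnit_det X).1 hX
  have hY' := (isUnit_iff_isUnit_det Y).1 hY
  simp only [Matrix.mul_add, Matrix.add_mul, Matrix.mul_sub, Matrix.sub_mul, Matrix.mul_assoc,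
    nonsing_inv_mul _ hX', mul_nonsing_inv _ hX', nonsing_inv_mul _ hY', mul_nonsing_inv _ hY',
    Matrix.mul_one, Matrix.one_mul, nonsing_inv_mul_cancel_left _ _ hX']
  abel

theorem PosDef.conj_inv {X M : Matrix n n 𝕜} (hX : X.PosDef) (hM : M.PosDef) :
    (X⁻¹ * M * X⁻¹).PosDef := by
  simpa only [star_eq_conjTranspose, hX.inv.1.eq] using
    (IsUnit.posDef_star_left_conjugate_iff hX.inv.isUnit).2 hM

theorem PosSemidef.conj_inv {X M : Matrix n n 𝕜} (hX : X.PosDef) (hM : M.PosSemidef) :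
    (X⁻¹ * M * X⁻¹).PosSemidef := by
  simpa only [hX.inv.1.eq] using hM.conjTranspose_mul_mul_same X⁻¹

theorem PosSemidef.mul_inv_mul_self {Y D : Matrix n n 𝕜} (hY : Y.PosDef) (hD : D.IsHermitian) :
    (D * Y⁻¹ * D).PosSemidef := by
  simpa only [hD.eq] using hY.inv.posSemidef.conjTranspose_mul_mul_same D

theorem PosDef.inv_sub_inv {X Y : Matrix n n 𝕜} (hY : Y.PosDef) (hXY : (X - Y).PosDef) :
    (Y⁻¹ - X⁻¹).PosDef := by
  have hX := hY.of_posSemidef_sub hXY.posSemidef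
  rw [inv_sub_inv_eq hX.isUnit hY.isUnit]
  exact hX.conj_inv (hXY.add_posSemidef (.mul_inv_mul_self hY hXY.1))

theorem PosSemidef.inv_sub_inv {X Y : Matrix n n 𝕜} (hY : Y.PosDef) (hXY : (X - Y).PosSemidef) :
    (Y⁻¹ - X⁻¹).PosSemidef := by
  have hX := hY.of_posSemidef_sub hXY
  rw [inv_sub_inv_eq hX.isUnit hY.isUnit]
  exact hXY.add (.mul_inv_mul_self hY hXY.1) |>.conj_inv hX

variable {ι : Type*} [Fintype ι] {w : ι → ℝ}

theorem posDef_sum_smul_inv (hw : ∀ i, 0 < w i) {X : ι → Matrix n n 𝕜}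
    (hX : ∀ i, (X i).PosDef) (j : ι) : (∑ i, w i • (X i)⁻¹).PosDef :=
  posDef_sum_of_posSemidef_of_posDef (fun i => ((hX i).inv.smul (hw i)).posSemidef) j
    ((hX j).inv.smul (hw j))

theorem posDef_sum_smul_inv_sub_sum_smul_inv (hw : ∀ i, 0 < w i) {X Y : ι → Matrix n n 𝕜}
    (hY : ∀ i, (Y i).PosDef) (hXY : ∀ i, (X i - Y i).PosSemidef) (j : ι)
    (hj : (X j - Y j).PosDef) :
    (∑ i, w i • (Y i)⁻¹ - ∑ i, w i • (X i)⁻¹).PosDef := by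
  simp_rw [← Finset.sum_sub_distrib, ← smul_sub]
  exact posDef_sum_of_posSemidef_of_posDef (fun i => ((hXY i).inv_sub_inv (hY i)).smul (hw i).le)
    j ((PosDef.inv_sub_inv (hY j) hj).smul (hw j))

theorem posDef_inv_sum_smul_inv_sub_inv_sum_smul_inv (hw : ∀ i, 0 < w i)
    {X Y : ι → Matrix n n 𝕜} (hY : ∀ i, (Y i).PosDef) (hXY : ∀ i, (X i - Y i).PosSemidef)
    (j : ι) (hj : (X j - Y j).PosDef) :
    ((∑ i, w i • (X i)⁻¹)⁻¹ - (∑ i, w i • (Y i)⁻¹)⁻¹).PosDef :=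
  PosDef.inv_sub_inv (posDef_sum_smul_inv hw (fun i => (hY i).of_posSemidef_sub (hXY i)) j)
    (posDef_sum_smul_inv_sub_sum_smul_inv hw hY hXY j hj)

end Matrix

theorem resolvent_average_strict_monotone_general (N n : ℕ)
    (A B : Fin n → Matrix (Fin N) (Fin N) ℝ) (w : Fin n → ℝ) (μ : ℝ)
    (hB : ∀ i, (B i).PosSemidef)
    (hAB : ∀ i, (A i - B i).PosSemidef)
    (j : Fin n) (hj : (A j - B j).PosDef)
    (hw : ∀ i, 0 < w i) (hμ : 0 < μ) :
    (((∑ i, w i • (A i + μ⁻¹ • 1)⁻¹)⁻¹ - μ⁻¹ • (1 : Matrix (Fin N) (Fin N) ℝ))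
      - ((∑ i, w i • (B i + μ⁻¹ • 1)⁻¹)⁻¹ - μ⁻¹ • 1)).PosDef := by
  have hshift : ∀ i, (B i + μ⁻¹ • 1 : Matrix (Fin N) (Fin N) ℝ).PosDef := fun i =>
    PosDef.posSemidef_add (hB i) (PosDef.one.smul (inv_pos.2 hμ))
  rw [sub_sub_sub_cancel_right]
  exact posDef_inv_sum_smul_inv_sub_inv_sum_smul_inv hw hshift
    (by simpa only [add_sub_add_right_eq_sub] using hAB) j
    (by simpa only [add_sub_add_right_eq_sub] using hj)

theorem resolvent_average_strict_monotone (N n : ℕ)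
    (A B : Fin n → Matrix (Fin N) (Fin N) ℝ) (w : Fin n → ℝ) (μ : ℝ)
    (hA : ∀ i, (A i).PosSemidef) (hB : ∀ i, (B i).PosSemidef)
    (hAB : ∀ i, (A i - B i).PosSemidef)
    (j : Fin n) (hj : (A j - B j).PosDef)
    (hw : ∀ i, 0 < w i) (hw1 : ∑ i, w i = 1) (hμ : 0 < μ) :
    (((∑ i, w i • (A i + μ⁻¹ • 1)⁻¹)⁻¹ - μ⁻¹ • (1 : Matrix (Fin N) (Fin N) ℝ))
      - ((∑ i, w i • (B i + μ⁻¹ • 1)⁻¹)⁻¹ - μ⁻¹ • 1)).PosDef :=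
  resolvent_average_strict_monotone_general N n A B w μ hB hAB j hj hw hμ
end

section
/- Harmonic–resolvent–arithmetic inequality: for positive definite matrices A₁,…,Aₙ, one has H(A,λ) ⪯ R_μ(A,λ) ⪯ 𝒜(A,λ), where H(A,λ) = (∑ᵢ λᵢAᵢ⁻¹)⁻¹ is the harmonic average and 𝒜(A,λ) = ∑ᵢ λᵢAᵢ is the arithmetic average. -/
/-!
For every Hermitian `S` and positive definite `M`,
`M⁻¹ - 2 S + S M S = (M⁻¹ - S) M (M⁻¹ - S) ⪰ 0`. Taking `S = (∑ wᵢ Mᵢ)⁻¹` and averaging over `i`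
gives the matrix AM–HM inequality `(∑ wᵢ Mᵢ)⁻¹ ⪯ ∑ wᵢ Mᵢ⁻¹`; taking `S = Y⁻¹`, `M = X` shows that
inversion is antitone. AM–HM for the matrices `Aᵢ + μ⁻¹` is the upper bound `R_μ ⪯ 𝒜`.
For the lower bound, write `c = μ⁻¹` and use the resolvent identity
`(A + c)⁻¹ = c⁻¹ (1 - (1 + c A⁻¹)⁻¹)`: AM–HM for the matrices `1 + c Aᵢ⁻¹`, whose average is
`1 + c H⁻¹`, gives `∑ wᵢ (Aᵢ + c)⁻¹ ⪯ c⁻¹ (1 - (1 + c H⁻¹)⁻¹) = (H + c)⁻¹`, and inverting yields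
`H + c ⪯ R_μ + c`.
-/

open Finset
open scoped ComplexOrder MatrixOrder

namespace Matrix

variable {𝕜 m ι : Type*} [RCLike 𝕜] [Fintype ι]

lemma posDef_sum_smul_s8 {w : ι → ℝ} {M : ι → Matrix m m 𝕜} (hw : ∀ i, 0 ≤ w i)
    (hw1 : ∑ i, w i = 1) (hM : ∀ i, (M i).PosDef) : (∑ i, w i • M i).PosDef := by
  classical
  obtain ⟨j, -, hj⟩ : ∃ j ∈ univ, (0 : ℝ) < w j := exists_lt_of_sum_lt (by simp [hw1])
  rw [← add_sum_erase _ _ (mem_univ j)]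
  exact ((hM j).smul hj).add_posSemidef
    (posSemidef_sum _ fun i _ => (hM i).posSemidef.smul (hw i))

variable [Fintype m] [DecidableEq m]

lemma nonsing_inv_sub_mul_mul_nonsing_inv_sub {R : Type*} [CommRing R] {M : Matrix m m R}
    (hM : IsUnit M.det) (S : Matrix m m R) : (M⁻¹ - S) * M * (M⁻¹ - S) = M⁻¹ - 2 • S + S * M * S := by
  simp only [sub_mul, mul_sub, nonsing_inv_mul _ hM, mul_nonsing_inv _ hM, mul_assoc, one_mul,
    mul_one]
  abel

lemma PosDef.two_smul_sub_mul_mul_le_inv {M S : Matrix m m 𝕜} (hM : M.PosDef)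
    (hS : S.IsHermitian) : 2 • S - S * M * S ≤ M⁻¹ := by
  have hsq : 0 ≤ (M⁻¹ - S) * M * (M⁻¹ - S) :=
    IsSelfAdjoint.conjugate_nonneg hM.posSemidef.nonneg (hM.inv.isHermitian.sub hS)
  rw [nonsing_inv_sub_mul_mul_nonsing_inv_sub hM.det_pos.ne'.isUnit] at hsq
  exact sub_nonneg.mp (by convert hsq using 1; abel)

lemma PosDef.inv_anti {X Y : Matrix m m 𝕜} (hX : X.PosDef) (hXY : X ≤ Y) : Y⁻¹ ≤ X⁻¹ := by
  have hY : Y.PosDef := by simpa using hX.add_posSemidef (le_iff.mp hXY)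
  have hY' : IsSelfAdjoint Y⁻¹ := hY.inv.isHermitian
  calc Y⁻¹ = 2 • Y⁻¹ - Y⁻¹ * Y * Y⁻¹ := by
        rw [nonsing_inv_mul _ hY.det_pos.ne'.isUnit, one_mul, two_nsmul, add_sub_cancel_right]
    _ ≤ 2 • Y⁻¹ - Y⁻¹ * X * Y⁻¹ := sub_le_sub_left (hY'.conjugate_le_conjugate hXY) _
    _ ≤ X⁻¹ := hX.two_smul_sub_mul_mul_le_inv hY'

theorem inv_sum_smul_le_sum_smul_inv {w : ι → ℝ} {M : ι → Matrix m m 𝕜} (hw : ∀ i, 0 ≤ w i)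
    (hw1 : ∑ i, w i = 1) (hM : ∀ i, (M i).PosDef) :
    (∑ i, w i • M i)⁻¹ ≤ ∑ i, w i • (M i)⁻¹ := by
  set S := ∑ i, w i • M i
  have hS : S.PosDef := posDef_sum_smul_s8 hw hw1 hM
  calc S⁻¹ = 2 • S⁻¹ - S⁻¹ * S * S⁻¹ := by
        rw [nonsing_inv_mul _ hS.det_pos.ne'.isUnit, one_mul, two_nsmul, add_sub_cancel_right]
    _ = ∑ i, w i • (2 • S⁻¹ - S⁻¹ * M i * S⁻¹) := by
        simp only [S, smul_sub, sum_sub_distrib, ← sum_smul, hw1, one_smul, mul_sum, sum_mul,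
          mul_smul_comm, smul_mul_assoc]
    _ ≤ ∑ i, w i • (M i)⁻¹ := sum_le_sum fun i _ =>
        smul_le_smul_of_nonneg_left ((hM i).two_smul_sub_mul_mul_le_inv hS.inv.isHermitian) (hw i)

theorem inv_sum_smul_inv_le_sum_smul {w : ι → ℝ} {M : ι → Matrix m m 𝕜} (hw : ∀ i, 0 ≤ w i)
    (hw1 : ∑ i, w i = 1) (hM : ∀ i, (M i).PosDef) :
    (∑ i, w i • (M i)⁻¹)⁻¹ ≤ ∑ i, w i • M i := by
  have hinv : ∀ i, (M i)⁻¹⁻¹ = M i := fun i =>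
    nonsing_inv_nonsing_inv _ (hM i).det_pos.ne'.isUnit
  simpa only [hinv] using inv_sum_smul_le_sum_smul_inv hw hw1 fun i => (hM i).inv

lemma PosDef.inv_add_smul_one {X : Matrix m m 𝕜} (hX : X.PosDef) {c : ℝ} (hc : 0 < c) :
    (X + c • 1)⁻¹ = c⁻¹ • (1 - (1 + c • X⁻¹)⁻¹) := by
  have hK : (1 + c • X⁻¹ : Matrix m m 𝕜).PosDef := PosDef.one.add (hX.inv.smul hc)
  have hXX : X * X⁻¹ = 1 := mul_nonsing_inv _ hX.det_pos.ne'.isUnit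
  have hKK : (1 + c • X⁻¹) * (1 + c • X⁻¹)⁻¹ = 1 := mul_nonsing_inv _ hK.det_pos.ne'.isUnit
  have hXK : X + c • 1 = X * (1 + c • X⁻¹) := by rw [mul_add, mul_one, mul_smul_comm, hXX]
  apply inv_eq_right_inv
  rw [hXK, mul_smul_comm, mul_assoc, mul_sub, mul_one, hKK, add_sub_cancel_left, mul_smul_comm,
    hXX, smul_smul, inv_mul_cancel₀ hc.ne', one_smul]

theorem sum_smul_inv_add_smul_one_le {w : ι → ℝ} {A : ι → Matrix m m 𝕜} (hw : ∀ i, 0 ≤ w i)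
    (hw1 : ∑ i, w i = 1) (hA : ∀ i, (A i).PosDef) {c : ℝ} (hc : 0 < c) :
    ∑ i, w i • (A i + c • 1)⁻¹ ≤ ((∑ i, w i • (A i)⁻¹)⁻¹ + c • 1)⁻¹ := by
  set G := ∑ i, w i • (A i)⁻¹
  have hG : G.PosDef := posDef_sum_smul_s8 hw hw1 fun i => (hA i).inv
  have hK : ∀ i, (1 + c • (A i)⁻¹).PosDef := fun i => PosDef.one.add ((hA i).inv.smul hc)
  calc ∑ i, w i • (A i + c • 1)⁻¹ = c⁻¹ • (1 - ∑ i, w i • (1 + c • (A i)⁻¹)⁻¹) := by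
        simp only [fun i => (hA i).inv_add_smul_one hc, smul_comm (w _) c⁻¹, ← smul_sum,
          smul_sub, sum_sub_distrib, ← sum_smul, hw1, one_smul]
    _ ≤ c⁻¹ • (1 - (∑ i, w i • (1 + c • (A i)⁻¹))⁻¹) :=
        smul_le_smul_of_nonneg_left (sub_le_sub_left (inv_sum_smul_le_sum_smul_inv hw hw1 hK) 1)
          (inv_nonneg.mpr hc.le)
    _ = c⁻¹ • (1 - (1 + c • G)⁻¹) := by
        simp only [smul_add, sum_add_distrib, ← sum_smul, hw1, one_smul, smul_comm (w _) c,
          ← smul_sum, G]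
    _ = (G⁻¹ + c • 1)⁻¹ := by
        rw [hG.inv.inv_add_smul_one hc, nonsing_inv_nonsing_inv _ hG.det_pos.ne'.isUnit]

end Matrix

open Matrix

theorem harmonic_resolvent_arithmetic (N n : ℕ)
    (A : Fin n → Matrix (Fin N) (Fin N) ℝ) (w : Fin n → ℝ) (μ : ℝ)
    (hA : ∀ i, (A i).PosDef) (hw : ∀ i, 0 < w i) (hw1 : ∑ i, w i = 1)
    (hμ : 0 < μ) :
    (((∑ i, w i • (A i + μ⁻¹ • 1)⁻¹)⁻¹ - μ⁻¹ • (1 : Matrix (Fin N) (Fin N) ℝ))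
        - (∑ i, w i • (A i)⁻¹)⁻¹).PosSemidef
    ∧ ((∑ i, w i • A i)
        - ((∑ i, w i • (A i + μ⁻¹ • 1)⁻¹)⁻¹ - μ⁻¹ • 1)).PosSemidef := by
  have hc : 0 < μ⁻¹ := inv_pos.mpr hμ
  have hw0 : ∀ i, 0 ≤ w i := fun i => (hw i).le
  have hshift : (μ⁻¹ • 1 : Matrix (Fin N) (Fin N) ℝ).PosSemidef := PosSemidef.one.smul hc.le
  have hH : (∑ i, w i • (A i)⁻¹)⁻¹.PosDef := (posDef_sum_smul_s8 hw0 hw1 fun i => (hA i).inv).inv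
  have hB : ∀ i, (A i + μ⁻¹ • 1).PosDef := fun i => (hA i).add_posSemidef hshift
  refine ⟨le_iff.mp (le_sub_iff_add_le.mpr ?_), le_iff.mp (sub_le_iff_le_add.mpr ?_)⟩
  · have hR := (posDef_sum_smul_s8 hw0 hw1 fun i => (hB i).inv).inv_anti
      (sum_smul_inv_add_smul_one_le hw0 hw1 hA hc)
    rwa [nonsing_inv_nonsing_inv _ (hH.add_posSemidef hshift).det_pos.ne'.isUnit] at hR
  · calc (∑ i, w i • (A i + μ⁻¹ • 1)⁻¹)⁻¹ ≤ ∑ i, w i • (A i + μ⁻¹ • 1) :=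
          inv_sum_smul_inv_le_sum_smul hw0 hw1 hB
      _ = ∑ i, w i • A i + μ⁻¹ • 1 := by
          simp only [smul_add, sum_add_distrib, ← sum_smul, hw1, one_smul]
end

section
/- As μ → 0⁺, the resolvent average converges to the arithmetic average: lim_{μ→0⁺} R_μ(A,λ) = λ₁A₁ + ⋯ + λₙAₙ. -/
/-! Writing `Tᵢ(μ) = (1 + μ Aᵢ)⁻¹`, we have `(Aᵢ + μ⁻¹)⁻¹ = μ Tᵢ(μ)` and `1 - Tᵢ(μ) = μ Tᵢ(μ) Aᵢ`.
With `B(μ) = ∑ wᵢ Tᵢ(μ)` and `∑ wᵢ = 1` this gives the exact identity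
`R_μ = μ⁻¹ (B(μ)⁻¹ - 1) = B(μ)⁻¹ ∑ wᵢ Tᵢ(μ) Aᵢ`,
whose right-hand side is continuous at `μ = 0`, where `Tᵢ = B = 1`. Positive definiteness of the
`Aᵢ` and of the weights makes every inverse here a genuine one for all `μ > 0`. -/

open Matrix Filter Topology

namespace Matrix

variable {m ι : Type*} [Fintype m] [DecidableEq m] [Fintype ι]

noncomputable def resolventAverage {K : Type*} [Field K] (μ : K) (A : ι → Matrix m m K)
    (w : ι → K) : Matrix m m K :=
  (∑ i, w i • (A i + μ⁻¹ • 1)⁻¹)⁻¹ - μ⁻¹ • 1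

section Field

variable {K : Type*} [Field K] {μ : K}

theorem inv_add_inv_smul_one {A : Matrix m m K} (hμ : μ ≠ 0) (hA : IsUnit (1 + μ • A).det) :
    (A + μ⁻¹ • 1)⁻¹ = μ • (1 + μ • A)⁻¹ := by
  have : Invertible μ⁻¹ := invertibleOfNonzero (inv_ne_zero hμ)
  rw [show A + μ⁻¹ • 1 = μ⁻¹ • (1 + μ • A) by
      rw [smul_add, smul_smul, inv_mul_cancel₀ hμ, one_smul, add_comm],
    inv_smul _ _ hA, invOf_eq_inv, inv_inv]

theorem one_sub_inv_one_add_smul {A : Matrix m m K} (hA : IsUnit (1 + μ • A).det) :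
    1 - (1 + μ • A)⁻¹ = μ • ((1 + μ • A)⁻¹ * A) := by
  have h := nonsing_inv_mul _ hA
  rw [mul_add, mul_one, mul_smul_comm] at h
  exact sub_eq_of_eq_add' h.symm

theorem resolventAverage_eq {A : ι → Matrix m m K} {w : ι → K} (hμ : μ ≠ 0)
    (hw1 : ∑ i, w i = 1) (hA : ∀ i, IsUnit (1 + μ • A i).det)
    (hB : IsUnit (∑ i, w i • (1 + μ • A i)⁻¹).det) :
    resolventAverage μ A w =
      (∑ i, w i • (1 + μ • A i)⁻¹)⁻¹ * ∑ i, w i • ((1 + μ • A i)⁻¹ * A i) := by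
  set B := ∑ i, w i • (1 + μ • A i)⁻¹
  have hsum : ∑ i, w i • (A i + μ⁻¹ • 1)⁻¹ = μ • B := by
    simp only [B, Finset.smul_sum, inv_add_inv_smul_one hμ (hA _), smul_comm μ]
  have hone_sub : 1 - B = μ • ∑ i, w i • ((1 + μ • A i)⁻¹ * A i) := by
    simp only [B, Finset.smul_sum, smul_comm μ, ← one_sub_inv_one_add_smul (hA _), smul_sub,
      Finset.sum_sub_distrib, ← Finset.sum_smul, hw1, one_smul]
  have : Invertible μ := invertibleOfNonzero hμ
  rw [resolventAverage, hsum, inv_smul _ _ hB, invOf_eq_inv, ← smul_sub,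
    show B⁻¹ - 1 = B⁻¹ * (1 - B) by rw [mul_sub, mul_one, nonsing_inv_mul _ hB],
    hone_sub, mul_smul_comm, smul_smul, inv_mul_cancel₀ hμ, one_smul]

end Field

section Limit

variable {𝕜 : Type*} [NormedField 𝕜]

theorem tendsto_inv_nhds_one :
    Tendsto Inv.inv (𝓝 (1 : Matrix m m 𝕜)) (𝓝 1) := by
  have h := continuousAt_matrix_inv (1 : Matrix m m 𝕜) <| by
    simpa only [det_one, Ring.inverse_eq_inv'] using continuousAt_inv₀ (one_ne_zero (α := 𝕜))
  rwa [ContinuousAt, inv_one] at h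

theorem tendsto_inv_one_add_smul (A : Matrix m m 𝕜) :
    Tendsto (fun μ : 𝕜 => (1 + μ • A)⁻¹) (𝓝 0) (𝓝 1) := by
  refine tendsto_inv_nhds_one.comp ?_
  simpa using ((tendsto_id (x := 𝓝 (0 : 𝕜))).smul_const A).const_add (1 : Matrix m m 𝕜)

theorem tendsto_inv_sum_smul_inv_one_add_smul_mul (A : ι → Matrix m m 𝕜) {w : ι → 𝕜}
    (hw1 : ∑ i, w i = 1) :
    Tendsto (fun μ : 𝕜 =>
        (∑ i, w i • (1 + μ • A i)⁻¹)⁻¹ * ∑ i, w i • ((1 + μ • A i)⁻¹ * A i))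
      (𝓝 0) (𝓝 (∑ i, w i • A i)) := by
  have hB : Tendsto (fun μ : 𝕜 => ∑ i, w i • (1 + μ • A i)⁻¹) (𝓝 0) (𝓝 1) := by
    simpa only [← Finset.sum_smul, hw1, one_smul] using tendsto_finsetSum Finset.univ
      fun i _ => (tendsto_inv_one_add_smul (A i)).const_smul (w i)
  have hC : Tendsto (fun μ : 𝕜 => ∑ i, w i • ((1 + μ • A i)⁻¹ * A i)) (𝓝 0)
      (𝓝 (∑ i, w i • A i)) := by
    simpa only [one_mul] using tendsto_finsetSum Finset.univ
      fun i _ => ((tendsto_inv_one_add_smul (A i)).mul_const (A i)).const_smul (w i)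
  simpa only [Function.comp_def, one_mul] using (tendsto_inv_nhds_one.comp hB).mul hC

end Limit

section PosDef

variable {μ : ℝ}

theorem PosDef.isUnit_det_one_add_smul {A : Matrix m m ℝ} (hA : A.PosDef) (hμ : 0 < μ) :
    IsUnit (1 + μ • A).det :=
  (isUnit_iff_isUnit_det _).mp (PosDef.one.add (hA.smul hμ)).isUnit

theorem posDef_sum_smul_inv_one_add_smul [Nonempty ι] {A : ι → Matrix m m ℝ} {w : ι → ℝ}
    (hA : ∀ i, (A i).PosDef) (hw : ∀ i, 0 < w i) (hμ : 0 < μ) :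
    (∑ i, w i • (1 + μ • A i)⁻¹).PosDef :=
  posDef_sum Finset.univ_nonempty fun i _ => (PosDef.one.add ((hA i).smul hμ)).inv.smul (hw i)

end PosDef

end Matrix

theorem resolvent_average_tendsto_arithmetic (N n : ℕ)
    (A : Fin n → Matrix (Fin N) (Fin N) ℝ) (w : Fin n → ℝ)
    (hA : ∀ i, (A i).PosDef) (hw : ∀ i, 0 < w i) (hw1 : ∑ i, w i = 1) :
    Tendsto (fun μ : ℝ =>
        (∑ i, w i • (A i + μ⁻¹ • 1)⁻¹)⁻¹ - μ⁻¹ • (1 : Matrix (Fin N) (Fin N) ℝ))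
      (nhdsWithin 0 (Set.Ioi 0)) (nhds (∑ i, w i • A i)) := by
  have : Nonempty (Fin n) :=
    Finset.univ_nonempty_iff.mp (Finset.nonempty_of_sum_ne_zero (hw1 ▸ one_ne_zero))
  refine ((tendsto_inv_sum_smul_inv_one_add_smul_mul A hw1).mono_left
    nhdsWithin_le_nhds).congr' ?_
  filter_upwards [self_mem_nhdsWithin] with μ (hμ : 0 < μ)
  exact (resolventAverage_eq hμ.ne' hw1 (fun i => (hA i).isUnit_det_one_add_smul hμ)
    ((isUnit_iff_isUnit_det _).mp (posDef_sum_smul_inv_one_add_smul hA hw hμ).isUnit)).symm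
end

section
/- Self-duality of the resolvent average: for positive definite A₁,…,Aₙ and μ > 0, the inverse of R_μ(A,λ) equals R_{μ⁻¹}(A⁻¹,λ), i.e., [ (∑ᵢ λᵢ(Aᵢ + μ⁻¹Id)⁻¹)⁻¹ − μ⁻¹Id ]⁻¹ = (∑ᵢ λᵢ(Aᵢ⁻¹ + μId)⁻¹)⁻¹ − μId. -/
/-!
By the resolvent identity, `(X⁻¹ + μ)⁻¹ = μ⁻¹ - μ⁻² (X + μ⁻¹)⁻¹`: the left side is an affine
function of `(X + μ⁻¹)⁻¹`, so it commutes with weighted averages. Hence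
`T := ∑ λᵢ (Aᵢ⁻¹ + μ)⁻¹ = μ⁻¹ - μ⁻² S` with `S := ∑ λᵢ (Aᵢ + μ⁻¹)⁻¹`. Applying the identity once
more, to the resolvent average `X := S⁻¹ - μ⁻¹` itself, gives `(X⁻¹ + μ)⁻¹ = T`.
Positive definiteness serves only to make every matrix that is inverted invertible.
-/

open Matrix

namespace Matrix

variable {m K : Type*} [Fintype m] [DecidableEq m]

theorem inv_add_smul_one_mul_eq_one [Field K] {X : Matrix m m K} {μ : K} (hμ : μ ≠ 0)
    (hX : IsUnit X) (hXμ : IsUnit (X + μ⁻¹ • 1)) :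
    (X⁻¹ + μ • 1) * (μ⁻¹ • 1 - μ⁻¹ ^ 2 • (X + μ⁻¹ • 1)⁻¹) = 1 := by
  have resolvent : X⁻¹ - (X + μ⁻¹ • 1)⁻¹ = μ⁻¹ • (X⁻¹ * (X + μ⁻¹ • 1)⁻¹) := by
    rw [inv_sub_inv (iff_of_true hX hXμ), add_sub_cancel_left, Matrix.mul_smul, mul_one,
      Matrix.smul_mul]
  calc (X⁻¹ + μ • 1) * (μ⁻¹ • 1 - μ⁻¹ ^ 2 • (X + μ⁻¹ • 1)⁻¹)
      = μ⁻¹ • (X⁻¹ - (X + μ⁻¹ • 1)⁻¹ - μ⁻¹ • (X⁻¹ * (X + μ⁻¹ • 1)⁻¹)) + 1 := by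
        simp only [Matrix.add_mul, Matrix.mul_sub, Matrix.mul_smul, Matrix.smul_mul,
          Matrix.mul_one, Matrix.one_mul]
        match_scalars <;> field_simp
    _ = 1 := by rw [resolvent, sub_self, smul_zero, zero_add]

theorem posDef_sum_smul_inv_s11 [Field K] [LinearOrder K] [StarRing K] [StarOrderedRing K]
    {ι : Type*} [Fintype ι] [Nonempty ι] {M : ι → Matrix m m K} {w : ι → K}
    (hM : ∀ i, (M i).PosDef) (hw : ∀ i, 0 < w i) : (∑ i, w i • (M i)⁻¹).PosDef :=
  posDef_sum Finset.univ_nonempty fun i _ => (hM i).inv.smul (hw i)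

end Matrix

theorem resolvent_average_self_dual (N n : ℕ)
    (A : Fin n → Matrix (Fin N) (Fin N) ℝ) (w : Fin n → ℝ) (μ : ℝ)
    (hA : ∀ i, (A i).PosDef) (hw : ∀ i, 0 < w i) (hw1 : ∑ i, w i = 1)
    (hμ : 0 < μ) :
    ((∑ i, w i • (A i + μ⁻¹ • 1)⁻¹)⁻¹ - μ⁻¹ • (1 : Matrix (Fin N) (Fin N) ℝ))⁻¹
      = (∑ i, w i • ((A i)⁻¹ + μ • 1)⁻¹)⁻¹ - μ • 1 := by
  have : Nonempty (Fin n) :=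
    Finset.univ_nonempty_iff.mp (Finset.nonempty_of_sum_ne_zero (hw1 ▸ one_ne_zero))
  have hPlus i : (A i + μ⁻¹ • 1).PosDef := (hA i).add (PosDef.one.smul (inv_pos.2 hμ))
  have hDual i : ((A i)⁻¹ + μ • 1).PosDef := (hA i).inv.add (PosDef.one.smul hμ)
  set S := ∑ i, w i • (A i + μ⁻¹ • 1)⁻¹
  set T := ∑ i, w i • ((A i)⁻¹ + μ • 1)⁻¹
  have hS : S.PosDef := posDef_sum_smul_inv_s11 hPlus hw
  have hSdet : IsUnit S.det := (isUnit_iff_isUnit_det S).1 hS.isUnit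
  have hT : T.PosDef := posDef_sum_smul_inv_s11 hDual hw
  have hTS : T = μ⁻¹ • 1 - μ⁻¹ ^ 2 • S := by
    calc T = ∑ i, w i • (μ⁻¹ • 1 - μ⁻¹ ^ 2 • (A i + μ⁻¹ • 1)⁻¹) := by
          simp only [T, fun i => inv_eq_right_inv
            (inv_add_smul_one_mul_eq_one hμ.ne' (hA i).isUnit (hPlus i).isUnit)]
      _ = μ⁻¹ • 1 - μ⁻¹ ^ 2 • S := by
          simp only [smul_sub, Finset.sum_sub_distrib, ← Finset.sum_smul, hw1, one_smul, S,
            Finset.smul_sum, smul_comm (w _) (μ⁻¹ ^ 2)]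
  set X := S⁻¹ - μ⁻¹ • 1
  have hXS : X + μ⁻¹ • 1 = S⁻¹ := sub_add_cancel _ _
  have hX : IsUnit X := by
    have hXfactor : X = S⁻¹ * (μ • T) := by
      rw [hTS, Matrix.mul_smul, Matrix.mul_sub, Matrix.mul_smul, Matrix.mul_smul, mul_one,
        nonsing_inv_mul _ hSdet]
      match_scalars <;> field_simp
    exact hXfactor ▸ hS.inv.isUnit.mul (hT.smul hμ).isUnit
  have hXT := inv_add_smul_one_mul_eq_one hμ.ne' hX (hXS ▸ hS.inv.isUnit)
  rw [hXS, nonsing_inv_nonsing_inv _ hSdet, ← hTS] at hXT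
  rw [inv_eq_left_inv hXT, add_sub_cancel_right]
end

section
/- The matrix inverse is matrix convex on positive definite matrices: for A, B positive definite and t ∈ [0,1], (tA + (1−t)B)⁻¹ ⪯ tA⁻¹ + (1−t)B⁻¹. -/
/-!
For positive definite `X` and Hermitian `T`,
`X⁻¹ - (2T - TXT) = (T - X⁻¹) X (T - X⁻¹) ⪰ 0`, with equality at `T = X⁻¹`. So `X⁻¹` is the
Loewner supremum of the maps `X ↦ 2T - TXT`, which are affine in `X`, and is therefore convex:
averaging the bounds at `A` and `B` for `T = C⁻¹`, `C = tA + (1-t)B`, gives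
`tA⁻¹ + (1-t)B⁻¹ ⪰ 2C⁻¹ - C⁻¹CC⁻¹ = C⁻¹`.
-/

open Matrix
open scoped ComplexOrder

namespace Matrix

variable {n : Type*} [Fintype n] [DecidableEq n]

theorem nonsing_inv_mul_mul_nonsing_inv {α : Type*} [CommRing α] (A : Matrix n n α) :
    A⁻¹ * A * A⁻¹ = A⁻¹ := by
  by_cases hA : IsUnit A.det
  · rw [nonsing_inv_mul A hA, Matrix.one_mul]
  · simp [nonsing_inv_apply_not_isUnit A hA]

theorem nonsing_inv_sub_eq_sub_mul_mul_sub {α : Type*} [CommRing α] {X : Matrix n n α}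
    (hX : IsUnit X.det) (T : Matrix n n α) :
    X⁻¹ - (2 • T - T * X * T) = (T - X⁻¹) * X * (T - X⁻¹) := by
  simp only [sub_mul, mul_sub, Matrix.mul_assoc, mul_nonsing_inv X hX,
    nonsing_inv_mul_cancel_left X _ hX, Matrix.mul_one, two_smul]
  abel

theorem PosDef.posSemidef_inv_sub_two_smul_sub_mul_mul {𝕜 : Type*} [RCLike 𝕜]
    {X T : Matrix n n 𝕜} (hX : X.PosDef) (hT : T.IsHermitian) :
    (X⁻¹ - (2 • T - T * X * T)).PosSemidef := by
  have hTX : (T - X⁻¹)ᴴ = T - X⁻¹ := (hT.sub hX.isHermitian.inv).eq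
  rw [nonsing_inv_sub_eq_sub_mul_mul_sub ((isUnit_iff_isUnit_det X).mp hX.isUnit) T]
  simpa [hTX] using hX.posSemidef.conjTranspose_mul_mul_same (T - X⁻¹)

end Matrix

theorem matrix_inv_convex (N : ℕ) (A B : Matrix (Fin N) (Fin N) ℝ)
    (hA : A.PosDef) (hB : B.PosDef) (t : ℝ) (ht0 : 0 ≤ t) (ht1 : t ≤ 1) :
    ((t • A⁻¹ + (1 - t) • B⁻¹) - (t • A + (1 - t) • B)⁻¹).PosSemidef := by
  set T := (t • A + (1 - t) • B)⁻¹
  have hT : T.IsHermitian :=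
    ((hA.posSemidef.smul ht0).add (hB.posSemidef.smul (sub_nonneg.2 ht1))).isHermitian.inv
  have hTCT : T * (t • A + (1 - t) • B) * T = T := nonsing_inv_mul_mul_nonsing_inv _
  have hsum := ((hA.posSemidef_inv_sub_two_smul_sub_mul_mul hT).smul ht0).add
    ((hB.posSemidef_inv_sub_two_smul_sub_mul_mul hT).smul (sub_nonneg.2 ht1))
  have hexpand : t • (A⁻¹ - (2 • T - T * A * T)) + (1 - t) • (B⁻¹ - (2 • T - T * B * T)) =
      t • A⁻¹ + (1 - t) • B⁻¹ - T :=
    calc _ = t • A⁻¹ + (1 - t) • B⁻¹ - 2 • T + T * (t • A + (1 - t) • B) * T := by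
          simp only [Matrix.mul_add, Matrix.add_mul, Matrix.mul_smul, Matrix.smul_mul]
          module
      _ = _ := by rw [hTCT]; module
  exact hexpand ▸ hsum
end
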